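/- arXiv:2309.08925 — 4 statements merged into one kernel-verified Lean document; each statement's English description precedes it below -/
import Mathlib

section
/- For any policy π and any function Q : S×A → ℝ with ‖Q‖_∞ ≤ R_max/(1−γ), the Bellman operators of the true MDP and the empirical MDP differ pointwise by at most the sampling error: for all (s,a), |(T_M^π Q)(s,a) − (T_M̄^π Q)(s,a)| < ((1−γ)·C_{r,δ} + 2γ·C_{T,δ}·R_max) / ((1−γ)·√|D(s,a)|). -/
open Finset

noncomputable section

variable {S A : Type*}

/-- t-step state distribution of the Markov chain induced by policy `π` and kernel `T`
starting from `ρ0`. -/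
def stateDist [Fintype S] [Fintype A] (ρ0 : S → ℝ) (π : S → A → ℝ)
    (T : S → A → S → ℝ) : ℕ → S → ℝ
  | 0 => ρ0
  | t + 1 => fun s' => ∑ s : S, ∑ a : A, stateDist ρ0 π T t s * π s a * T s a s'

/-- Discounted occupancy measure over states: `d_M^π(s) = (1-γ) ∑_t γ^t Pr(s_t = s)`. -/
def occ [Fintype S] [Fintype A] (γ : ℝ) (ρ0 : S → ℝ) (π : S → A → ℝ)
    (T : S → A → S → ℝ) (s : S) : ℝ :=
  (1 - γ) * ∑' t : ℕ, γ ^ t * stateDist ρ0 π T t s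

/-- Discounted state-action occupancy measure: `d_M^π(s,a) = d_M^π(s) π(a|s)`. -/
def occSA [Fintype S] [Fintype A] (γ : ℝ) (ρ0 : S → ℝ) (π : S → A → ℝ)
    (T : S → A → S → ℝ) (s : S) (a : A) : ℝ :=
  occ γ ρ0 π T s * π s a

/-- Discounted return `J(M,π) = (1/(1-γ)) ∑_{s,a} d_M^π(s,a) r(s,a)`. -/
def Jret [Fintype S] [Fintype A] (γ : ℝ) (ρ0 : S → ℝ) (π : S → A → ℝ)
    (T : S → A → S → ℝ) (r : S → A → ℝ) : ℝ :=
  (1 / (1 - γ)) * ∑ s : S, ∑ a : A, occSA γ ρ0 π T s a * r s a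

/-- Bellman operator of policy `π` under reward `r` and transition kernel `T`. -/
def bellman [Fintype S] [Fintype A] (γ : ℝ) (r : S → A → ℝ) (T : S → A → S → ℝ)
    (π : S → A → ℝ) (Q : S → A → ℝ) (s : S) (a : A) : ℝ :=
  r s a + γ * ∑ s' : S, T s a s' * ∑ a' : A, π s' a' * Q s' a'

/-- Total variation distance between two finitely supported distributions. -/
def tvDist [Fintype S] (p q : S → ℝ) : ℝ := (1 / 2) * ∑ s : S, |p s - q s|

/-- `π` is a policy: `π(·|s)` is a probability distribution on actions for each `s`. -/
def IsPolicy [Fintype A] (π : S → A → ℝ) : Prop :=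
  (∀ s a, 0 ≤ π s a) ∧ ∀ s, ∑ a : A, π s a = 1

/-- `T` is a transition kernel: `T(·|s,a)` is a probability distribution on states. -/
def IsKernel [Fintype S] (T : S → A → S → ℝ) : Prop :=
  (∀ s a s', 0 ≤ T s a s') ∧ ∀ s a, ∑ s' : S, T s a s' = 1

/-- Lemma 1, first part: the Bellman operators of the true MDP `M`
and the empirical MDP `M̄` differ pointwise by at most the sampling error. -/
theorem bellman_empirical_error [Fintype S] [Fintype A]
    (γ Rmax Crδ CTδ : ℝ) (hγ0 : 0 < γ) (hγ1 : γ < 1)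
    (hCr : 0 < Crδ) (hCT : 0 < CTδ)
    (rM rMbar : S → A → ℝ) (TM TMbar : S → A → S → ℝ)
    (hTM : IsKernel TM) (hTMbar : IsKernel TMbar)
    (hr : ∀ s a, |rM s a| ≤ Rmax)
    (π : S → A → ℝ) (hπ : IsPolicy π)
    (Dcnt : S → A → ℝ) (hD : ∀ s a, 1 ≤ Dcnt s a)
    (hr_err : ∀ s a, |rM s a - rMbar s a| < Crδ / Real.sqrt (Dcnt s a))
    (hT_err : ∀ s a, ∑ s' : S, |TM s a s' - TMbar s a s'| < CTδ / Real.sqrt (Dcnt s a))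
    (Q : S → A → ℝ) (hQ : ∀ s a, |Q s a| ≤ Rmax / (1 - γ)) :
    ∀ s a, |bellman γ rM TM π Q s a - bellman γ rMbar TMbar π Q s a| <
      ((1 - γ) * Crδ + 2 * γ * CTδ * Rmax) / ((1 - γ) * Real.sqrt (Dcnt s a)) := by

  intro s a
  have h1γ : 0 < 1 - γ := by linarith
  have hRmax : 0 ≤ Rmax := le_trans (abs_nonneg _) (hr s a)
  set D := Real.sqrt (Dcnt s a) with hDdef
  have hDpos : 0 < D := Real.sqrt_pos.mpr (lt_of_lt_of_le one_pos (hD s a))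
  set V : S → ℝ := fun s' => ∑ a' : A, π s' a' * Q s' a' with hV
  have hVbd : ∀ s', |V s'| ≤ Rmax / (1 - γ) := by
    intro s'
    have : |V s'| ≤ ∑ a' : A, |π s' a' * Q s' a'| := Finset.abs_sum_le_sum_abs _ _
    refine this.trans ?_
    have : ∑ a' : A, |π s' a' * Q s' a'| ≤ ∑ a' : A, π s' a' * (Rmax / (1 - γ)) := by
      apply Finset.sum_le_sum
      intro a' _
      rw [abs_mul, abs_of_nonneg (hπ.1 s' a')]
      exact mul_le_mul_of_nonneg_left (hQ s' a') (hπ.1 s' a')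
    refine this.trans ?_
    rw [← Finset.sum_mul, hπ.2 s', one_mul]
  have key : bellman γ rM TM π Q s a - bellman γ rMbar TMbar π Q s a
      = (rM s a - rMbar s a) + γ * ∑ s' : S, (TM s a s' - TMbar s a s') * V s' := by
    simp only [bellman, hV, sub_mul, Finset.sum_sub_distrib]
    ring
  have hsum : |∑ s' : S, (TM s a s' - TMbar s a s') * V s'|
      ≤ (Rmax / (1 - γ)) * (∑ s' : S, |TM s a s' - TMbar s a s'|) := by
    refine (Finset.abs_sum_le_sum_abs _ _).trans ?_
    rw [Finset.mul_sum]
    apply Finset.sum_le_sum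
    intro s' _
    rw [abs_mul, mul_comm]
    exact mul_le_mul_of_nonneg_right (hVbd s') (abs_nonneg _)
  have hsum2 : (Rmax / (1 - γ)) * (∑ s' : S, |TM s a s' - TMbar s a s'|)
      ≤ (Rmax / (1 - γ)) * (CTδ / D) :=
    mul_le_mul_of_nonneg_left (le_of_lt (hT_err s a)) (div_nonneg hRmax h1γ.le)
  have habs : |bellman γ rM TM π Q s a - bellman γ rMbar TMbar π Q s a|
      ≤ |rM s a - rMbar s a| + γ * ((Rmax / (1 - γ)) * (CTδ / D)) := by
    rw [key]
    refine (abs_add_le _ _).trans ?_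
    gcongr
    rw [abs_mul, abs_of_pos hγ0]
    exact mul_le_mul_of_nonneg_left (hsum.trans hsum2) hγ0.le
  have hlt : |rM s a - rMbar s a| + γ * ((Rmax / (1 - γ)) * (CTδ / D))
      < Crδ / D + γ * ((Rmax / (1 - γ)) * (CTδ / D)) := by
    have := hr_err s a
    linarith
  refine lt_of_le_of_lt habs (lt_of_lt_of_le hlt ?_)
  have heq : Crδ / D + γ * ((Rmax / (1 - γ)) * (CTδ / D))
      = ((1 - γ) * Crδ + γ * CTδ * Rmax) / ((1 - γ) * D) := by
    field_simp
  rw [heq]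
  gcongr
  nlinarith [mul_nonneg (mul_nonneg hγ0.le hCT.le) hRmax]
end
end

section
/- For any policy π and any function Q : S×A → ℝ with ‖Q‖_∞ ≤ R_max/(1−γ), the Bellman operators of the true MDP and the learned MDP differ pointwise by at most the model error: for all (s,a), |(T_M^π Q)(s,a) − (T_M̂^π Q)(s,a)| ≤ ε_r(s,a) + (2γ·R_max/(1−γ))·D(s,a). -/
open Finset

noncomputable section

variable {S A : Type*}

/-! The two operators differ by the reward gap plus `γ ∑ₛ' (T − T̂)(s'|s,a) V(s')`, where
`V(s') = ∑ₐ' π(a'|s') Q(s',a')` is again bounded by `‖Q‖∞`; pairing a signed difference of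
distributions with a function bounded by `C` costs at most `C ∑ |p − q| = 2 C D_TV(p, q)`. -/

theorem abs_sum_sub_mul_le_tvDist [Fintype S] (p q V : S → ℝ) {C : ℝ}
    (hV : ∀ s, |V s| ≤ C) :
    |∑ s, (p s - q s) * V s| ≤ 2 * C * tvDist p q :=
  calc |∑ s, (p s - q s) * V s|
      ≤ ∑ s, |p s - q s| * |V s| := by
        simpa only [abs_mul] using abs_sum_le_sum_abs (fun s => (p s - q s) * V s) univ
    _ ≤ ∑ s, |p s - q s| * C := by
        gcongr with s
        exact hV s
    _ = 2 * C * tvDist p q := by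
        rw [tvDist, ← sum_mul]
        ring

theorem IsPolicy.abs_sum_mul_le [Fintype A] {π : S → A → ℝ} (hπ : IsPolicy π)
    {Q : S → A → ℝ} {C : ℝ} (hQ : ∀ s a, |Q s a| ≤ C) (s : S) :
    |∑ a, π s a * Q s a| ≤ C :=
  calc |∑ a, π s a * Q s a|
      ≤ ∑ a, |π s a * Q s a| := abs_sum_le_sum_abs _ _
    _ ≤ ∑ a, π s a * C := by
        gcongr with a
        rw [abs_mul, abs_of_nonneg (hπ.1 s a)]
        exact mul_le_mul_of_nonneg_left (hQ s a) (hπ.1 s a)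
    _ = C := by rw [← sum_mul, hπ.2 s, one_mul]

theorem bellman_sub_bellman [Fintype S] [Fintype A] (γ : ℝ)
    (r r' : S → A → ℝ) (T T' : S → A → S → ℝ) (π Q : S → A → ℝ) (s : S) (a : A) :
    bellman γ r T π Q s a - bellman γ r' T' π Q s a =
      (r s a - r' s a) + γ * ∑ s', (T s a s' - T' s a s') * ∑ a', π s' a' * Q s' a' := by
  simp only [bellman, sub_mul, sum_sub_distrib]
  ring

theorem bellman_model_error_general [Fintype S] [Fintype A]
    (γ Rmax : ℝ) (hγ0 : 0 < γ)
    (rM rMhat : S → A → ℝ) (TM TMhat : S → A → S → ℝ)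
    (π : S → A → ℝ) (hπ : IsPolicy π)
    (Q : S → A → ℝ) (hQ : ∀ s a, |Q s a| ≤ Rmax / (1 - γ)) :
    ∀ s a, |bellman γ rM TM π Q s a - bellman γ rMhat TMhat π Q s a| ≤
      |rM s a - rMhat s a| + (2 * γ * Rmax / (1 - γ)) * tvDist (TM s a) (TMhat s a) := by
  intro s a
  have htransition := abs_sum_sub_mul_le_tvDist (TM s a) (TMhat s a) _ (hπ.abs_sum_mul_le hQ)
  rw [bellman_sub_bellman]
  calc _ ≤ |rM s a - rMhat s a|
          + |γ * ∑ s', (TM s a s' - TMhat s a s') * ∑ a', π s' a' * Q s' a'| := abs_add_le _ _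
    _ ≤ |rM s a - rMhat s a| + γ * (2 * (Rmax / (1 - γ)) * tvDist (TM s a) (TMhat s a)) := by
        rw [abs_mul, abs_of_pos hγ0]
        gcongr
    _ = |rM s a - rMhat s a| + (2 * γ * Rmax / (1 - γ)) * tvDist (TM s a) (TMhat s a) := by
        ring

/-- Lemma 1, second part: the Bellman operators of the true MDP `M`
and the learned MDP `M̂` differ pointwise by at most the model error. -/
theorem bellman_model_error [Fintype S] [Fintype A]
    (γ Rmax : ℝ) (hγ0 : 0 < γ) (hγ1 : γ < 1)
    (rM rMhat : S → A → ℝ) (TM TMhat : S → A → S → ℝ)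
    (hTM : IsKernel TM) (hTMhat : IsKernel TMhat)
    (hr : ∀ s a, |rM s a| ≤ Rmax)
    (π : S → A → ℝ) (hπ : IsPolicy π)
    (Q : S → A → ℝ) (hQ : ∀ s a, |Q s a| ≤ Rmax / (1 - γ)) :
    ∀ s a, |bellman γ rM TM π Q s a - bellman γ rMhat TMhat π Q s a| ≤
      |rM s a - rMhat s a| + (2 * γ * Rmax / (1 - γ)) * tvDist (TM s a) (TMhat s a) :=
  bellman_model_error_general γ Rmax hγ0 rM rMhat TM TMhat π hπ Q hQ
end
end

section
/- Fix a state s and suppose Σ_a ω(s,a) > ξ(s)·Σ_a d(s,a), where ξ(s) = [(1−f)·d^{π_b}(s)·max_a(π_b(a|s)/π(a|s)) + f·d_M̂^π(s)] / [(1−f)·d^{π_b}(s)·min_a(π_b(a|s)/π(a|s)) + f·d_M̂^π(s)]. Then the expected penalty at s is strictly positive: Σ_a π(a|s)·η(s,a) > 0, where η(s,a) = (ω(s,a) − d(s,a)) / ((1−f)·d^{π_b}(s)·π_b(a|s) + f·d_M̂^π(s)·π(a|s)). -/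
open Finset

noncomputable section

/-- at a fixed state `s`, if `∑_a ω(s,a) > ξ(s) ∑_a d(s,a)` with
`ξ(s) = [(1−f) d^{π_b}(s) max_a(π_b(a|s)/π(a|s)) + f d_M̂^π(s)] /
        [(1−f) d^{π_b}(s) min_a(π_b(a|s)/π(a|s)) + f d_M̂^π(s)]`,
then the expected penalty at `s` is strictly positive:
`∑_a π(a|s) η(s,a) > 0` where
`η(s,a) = (ω(s,a) − d(s,a)) / ((1−f) d^{π_b}(s) π_b(a|s) + f d_M̂^π(s) π(a|s))`
and `d(s,a) = d^{π_b}(s) π_b(a|s)`. -/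
theorem expected_penalty_pos {A : Type*} [Fintype A] [Nonempty A]
    (f dπb dhat : ℝ) (hf0 : 0 ≤ f) (hf1 : f ≤ 1)
    (hdπb : 0 < dπb) (hdhat : 0 ≤ dhat)
    (hmix : 0 < (1 - f) * dπb + f * dhat)
    (πb : A → ℝ) (hπbnn : ∀ a, 0 ≤ πb a) (hπbsum : ∑ a : A, πb a = 1)
    (π : A → ℝ) (hπpos : ∀ a, 0 < π a) (hπsum : ∑ a : A, π a = 1)
    (ω : A → ℝ) (hω : ∀ a, 0 ≤ ω a)
    (hden : ∀ a, 0 < (1 - f) * dπb * πb a + f * dhat * π a)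
    (hcond : ∑ a : A, ω a >
      (((1 - f) * dπb * (⨆ a : A, πb a / π a) + f * dhat) /
          ((1 - f) * dπb * (⨅ a : A, πb a / π a) + f * dhat)) *
        ∑ a : A, dπb * πb a) :
    0 < ∑ a : A, π a *
      ((ω a - dπb * πb a) / ((1 - f) * dπb * πb a + f * dhat * π a)) := by
  set m := ⨅ a : A, πb a / π a with hm
  set M := ⨆ a : A, πb a / π a with hMdef
  have hrnn : ∀ a, 0 ≤ πb a / π a := fun a => div_nonneg (hπbnn a) (hπpos a).le
  have hbdd : BddAbove (Set.range fun a : A => πb a / π a) :=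
    Set.Finite.bddAbove (Set.finite_range _)
  have hbddb : BddBelow (Set.range fun a : A => πb a / π a) :=
    Set.Finite.bddBelow (Set.finite_range _)
  have hmle : ∀ a, m ≤ πb a / π a := fun a => ciInf_le hbddb a
  have hMge : ∀ a, πb a / π a ≤ M := fun a => le_ciSup hbdd a
  have hmnn : 0 ≤ m := le_ciInf hrnn
  have hmM : m ≤ M := le_trans (hmle (Classical.arbitrary A)) (hMge _)
  have h1f : 0 ≤ 1 - f := by linarith
  have hfd : 0 ≤ f * dhat := mul_nonneg hf0 hdhat
  have hcoef : 0 ≤ (1 - f) * dπb := mul_nonneg h1f hdπb.le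
  set Dm := (1 - f) * dπb * m + f * dhat with hDm
  set DM := (1 - f) * dπb * M + f * dhat with hDM
  have hDmpos : 0 < Dm := by
    rcases lt_or_eq_of_le hfd with h | h
    · have : 0 ≤ (1 - f) * dπb * m := mul_nonneg hcoef hmnn
      simp only [hDm]; linarith
    · have hfd0 : f * dhat = 0 := h.symm
      have hpos : 0 < (1 - f) * dπb := by nlinarith
      have hπbpos : ∀ a, 0 < πb a := by
        intro a
        have hd := hden a
        have hp := hπpos a
        nlinarith
      obtain ⟨a0, ha0⟩ := Finite.exists_min (fun a : A => πb a / π a)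
      have hmm : πb a0 / π a0 ≤ m := le_ciInf ha0
      have : 0 < m := lt_of_lt_of_le (div_pos (hπbpos a0) (hπpos a0)) hmm
      simp only [hDm]; nlinarith
  have hDmDM : Dm ≤ DM := by
    have := mul_le_mul_of_nonneg_left hmM hcoef
    simp only [hDm, hDM]; linarith
  have hDMpos : 0 < DM := lt_of_lt_of_le hDmpos hDmDM
  have heDm : ∀ a, Dm ≤ (1 - f) * dπb * (πb a / π a) + f * dhat := by
    intro a
    have := mul_le_mul_of_nonneg_left (hmle a) hcoef
    simp only [hDm]; linarith
  have heDM : ∀ a, (1 - f) * dπb * (πb a / π a) + f * dhat ≤ DM := by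
    intro a
    have := mul_le_mul_of_nonneg_left (hMge a) hcoef
    simp only [hDM]; linarith
  have hepos : ∀ a, 0 < (1 - f) * dπb * (πb a / π a) + f * dhat :=
    fun a => lt_of_lt_of_le hDmpos (heDm a)
  have hrw : ∀ a, π a * ((ω a - dπb * πb a) / ((1 - f) * dπb * πb a + f * dhat * π a))
      = ω a / ((1 - f) * dπb * (πb a / π a) + f * dhat)
        - dπb * πb a / ((1 - f) * dπb * (πb a / π a) + f * dhat) := by
    intro a
    have hpa := hπpos a
    have hD := hden a
    have he := hepos a
    rw [div_sub_div_same]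
    field_simp
  have key : ∀ a ∈ Finset.univ, ω a / DM - dπb * πb a / Dm ≤
      π a * ((ω a - dπb * πb a) / ((1 - f) * dπb * πb a + f * dhat * π a)) := by
    intro a _
    rw [hrw a]
    have h1 : ω a / DM ≤ ω a / ((1 - f) * dπb * (πb a / π a) + f * dhat) := by
      apply div_le_div_of_nonneg_left (hω a) (hepos a) (heDM a)
    have h2 : dπb * πb a / ((1 - f) * dπb * (πb a / π a) + f * dhat) ≤ dπb * πb a / Dm := by
      apply div_le_div_of_nonneg_left (mul_nonneg hdπb.le (hπbnn a)) hDmpos (heDm a)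
    linarith
  have hsum := Finset.sum_le_sum key
  have hsplit : ∑ a : A, (ω a / DM - dπb * πb a / Dm)
      = (∑ a : A, ω a) / DM - (∑ a : A, dπb * πb a) / Dm := by
    rw [Finset.sum_sub_distrib, Finset.sum_div, Finset.sum_div]
  have hpos : 0 < (∑ a : A, ω a) / DM - (∑ a : A, dπb * πb a) / Dm := by
    rw [sub_pos, div_lt_div_iff₀ hDmpos hDMpos]
    rw [gt_iff_lt, div_mul_eq_mul_div, div_lt_iff₀ hDmpos] at hcond
    rw [mul_comm]
    exact hcond
  calc (0:ℝ) < (∑ a : A, ω a) / DM - (∑ a : A, dπb * πb a) / Dm := hpos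
    _ = ∑ a : A, (ω a / DM - dπb * πb a / Dm) := hsplit.symm
    _ ≤ _ := hsum
end
end

section
/- At any point (s,a,s') where all the quantities below are positive, the dynamics ratio equals the discriminator-probability ratio: T_M̂(s'|s,a) / T_M(s'|s,a) = [ p(model | s,a,s') · p(offline | s,a) ] / [ p(offline | s,a,s') · p(model | s,a) ]. -/
open Finset

noncomputable section

/-- at any point `(s,a,s')` where all involved quantities are positive,
the dynamics ratio `T_M̂(s'|s,a) / T_M(s'|s,a)` equals the discriminator-probability ratio
`[p(model|s,a,s') p(offline|s,a)] / [p(offline|s,a,s') p(model|s,a)]`. -/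
theorem dynamics_ratio_eq_discriminator_ratio {S A : Type*} [Fintype S] [Fintype A]
    (poff pmod : S → A → S → ℝ)
    (hoffnn : ∀ s a s', 0 ≤ poff s a s') (hmodnn : ∀ s a s', 0 ≤ pmod s a s')
    (hoffsum : ∑ s : S, ∑ a : A, ∑ s' : S, poff s a s' = 1)
    (hmodsum : ∑ s : S, ∑ a : A, ∑ s' : S, pmod s a s' = 1)
    (α : ℝ) (hα0 : 0 < α) (hα1 : α < 1)
    (s : S) (a : A) (s' : S)
    (hoffpos : 0 < poff s a s') (hmodpos : 0 < pmod s a s')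
    (hoffsapos : 0 < ∑ t : S, poff s a t) (hmodsapos : 0 < ∑ t : S, pmod s a t) :
    (pmod s a s' / ∑ t : S, pmod s a t) / (poff s a s' / ∑ t : S, poff s a t) =
      ((α * pmod s a s' / (α * pmod s a s' + (1 - α) * poff s a s')) *
          (1 - α * (∑ t : S, pmod s a t) /
            (α * (∑ t : S, pmod s a t) + (1 - α) * ∑ t : S, poff s a t))) /
        ((1 - α * pmod s a s' / (α * pmod s a s' + (1 - α) * poff s a s')) *
          (α * (∑ t : S, pmod s a t) /
            (α * (∑ t : S, pmod s a t) + (1 - α) * ∑ t : S, poff s a t))) := by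
  set x := pmod s a s' with hx
  set y := poff s a s' with hy
  set X := ∑ t : S, pmod s a t with hX
  set Y := ∑ t : S, poff s a t with hY
  have h1a : 0 < 1 - α := by linarith
  have h1 : 0 < α * x + (1 - α) * y := by positivity
  have h2 : 0 < α * X + (1 - α) * Y := by positivity
  have e1 : 1 - α * x / (α * x + (1 - α) * y) = (1 - α) * y / (α * x + (1 - α) * y) := by
    field_simp
    ring
  have e2 : 1 - α * X / (α * X + (1 - α) * Y) = (1 - α) * Y / (α * X + (1 - α) * Y) := by
    field_simp
    ring
  rw [e1, e2]
  field_simp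
end
end
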